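/- Kreĭn resolvent formula: let λ ∈ ρ(A_B) ∩ ρ(A_C) and h ∈ H, and set w := (A_C − λI)^{−1}h. Then (Γ₁ − BΓ₂)w ∈ Ran(Γ₁ − BΓ₂) and in fact (Γ₁ − BΓ₂)w = (C − B)Γ₂w; the element g := −(Γ₁ − BΓ₂)w − (B − C)·M_B(λ)((Γ₁ − BΓ₂)w) belongs to Ran(Γ₁ − CΓ₂); and (A_B − λI)^{−1}h = (A_C − λI)^{−1}h + S_{λ,C} g. -/
import Mathlib


open scoped InnerProductSpace

variable {H 𝓗 𝓚 : Type*}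
  [NormedAddCommGroup H] [InnerProductSpace ℂ H] [CompleteSpace H]
  [NormedAddCommGroup 𝓗] [InnerProductSpace ℂ 𝓗] [CompleteSpace 𝓗]
  [NormedAddCommGroup 𝓚] [InnerProductSpace ℂ 𝓚] [CompleteSpace 𝓚]

/-- `R` is the (bounded, everywhere defined) inverse of `A_B − λ`, where `A_B` is the
restriction of `T` to `{u ∈ D(T) : Γ₁ u = B (Γ₂ u)}`. -/
def IsResolventAt (dom : Submodule ℂ H) (T : dom →ₗ[ℂ] H)
    (Γ₁ : dom →ₗ[ℂ] 𝓗) (Γ₂ : dom →ₗ[ℂ] 𝓚) (B : 𝓚 →L[ℂ] 𝓗)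
    (lam : ℂ) (R : H →L[ℂ] H) : Prop :=
  (∀ h : H, ∃ hm : R h ∈ dom,
      Γ₁ ⟨R h, hm⟩ = B (Γ₂ ⟨R h, hm⟩) ∧ T ⟨R h, hm⟩ - lam • R h = h) ∧
  (∀ u : dom, Γ₁ u = B (Γ₂ u) → R (T u - lam • (u : H)) = (u : H))

/-- The resolvent set `ρ(A_B)`. -/
def resolventSetB (dom : Submodule ℂ H) (T : dom →ₗ[ℂ] H)
    (Γ₁ : dom →ₗ[ℂ] 𝓗) (Γ₂ : dom →ₗ[ℂ] 𝓚) (B : 𝓚 →L[ℂ] 𝓗) : Set ℂ :=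
  {lam | ∃ R : H →L[ℂ] H, IsResolventAt dom T Γ₁ Γ₂ B lam R}

theorem stmt3 (dom : Submodule ℂ H) (T : dom →ₗ[ℂ] H)
    (Γ₁ : dom →ₗ[ℂ] 𝓗) (Γ₂ : dom →ₗ[ℂ] 𝓚) (B C : 𝓚 →L[ℂ] 𝓗)
    (lam : ℂ) (RB : H →L[ℂ] H)
    (hRB : IsResolventAt dom T Γ₁ Γ₂ B lam RB)
    (hlamC : lam ∈ resolventSetB dom T Γ₁ Γ₂ C)
    (h : H)
    -- `w := (A_C − λ)⁻¹ h`
    (w : dom) (hwBC : Γ₁ w = C (Γ₂ w)) (hw : T w - lam • (w : H) = h)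
    -- `u := S_{λ,B} ((Γ₁ − BΓ₂) w)`, so that `M_B(λ)((Γ₁ − BΓ₂)w) = Γ₂ u`
    (u : dom) (hu : T u = lam • (u : H) ∧ Γ₁ u - B (Γ₂ u) = Γ₁ w - B (Γ₂ w)) :
    -- `(Γ₁ − BΓ₂) w ∈ Ran (Γ₁ − BΓ₂)` and `(Γ₁ − BΓ₂)w = (C − B) Γ₂ w`
    (Γ₁ w - B (Γ₂ w) ∈ Set.range (fun v : dom => Γ₁ v - B (Γ₂ v))) ∧
    (Γ₁ w - B (Γ₂ w) = C (Γ₂ w) - B (Γ₂ w)) ∧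
    -- `g := −(Γ₁ − BΓ₂)w − (B − C) M_B(λ)((Γ₁ − BΓ₂)w)` lies in `Ran (Γ₁ − CΓ₂)`
    (-(Γ₁ w - B (Γ₂ w)) - (B (Γ₂ u) - C (Γ₂ u)) ∈
      Set.range (fun v : dom => Γ₁ v - C (Γ₂ v))) ∧
    -- Kreĭn formula: `(A_B − λ)⁻¹ h = (A_C − λ)⁻¹ h + S_{λ,C} g`
    (∀ v : dom,
      T v = lam • (v : H) ∧
          Γ₁ v - C (Γ₂ v) = -(Γ₁ w - B (Γ₂ w)) - (B (Γ₂ u) - C (Γ₂ u)) →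
        RB h = (w : H) + (v : H)) := by
  obtain ⟨hTu, hbd⟩ := hu
  obtain ⟨RC, hRC⟩ := hlamC
  refine ⟨⟨w, rfl⟩, by rw [hwBC], ⟨w - u, ?_⟩, ?_⟩
  · simp only [map_sub]
    calc Γ₁ w - Γ₁ u - (C (Γ₂ w) - C (Γ₂ u))
        = (Γ₁ w - C (Γ₂ w)) - (Γ₁ u - B (Γ₂ u)) - (B (Γ₂ u) - C (Γ₂ u)) := by
          abel
      _ = -(Γ₁ w - B (Γ₂ w)) - (B (Γ₂ u) - C (Γ₂ u)) := by
          rw [hbd, hwBC]; abel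
  · rintro v ⟨hTv, hΓv⟩
    -- uniqueness at `λ ∈ ρ(A_C)` forces `v = -u`
    have key : Γ₁ (v + u) = C (Γ₂ (v + u)) := by
      rw [← sub_eq_zero]
      simp only [map_add]
      calc Γ₁ v + Γ₁ u - (C (Γ₂ v) + C (Γ₂ u))
          = (Γ₁ v - C (Γ₂ v)) + (Γ₁ u - B (Γ₂ u)) + (B (Γ₂ u) - C (Γ₂ u)) := by abel
        _ = 0 := by rw [hΓv, hbd]; abel
    have hz := hRC.2 (v + u) key
    have harg : T (v + u) - lam • ((v + u : dom) : H) = 0 := by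
      simp only [map_add, Submodule.coe_add, smul_add, hTv, hTu]; abel
    rw [harg, map_zero] at hz
    have hvu : v + u = 0 := Subtype.ext hz.symm
    have hv : v = -u := eq_neg_of_add_eq_zero_left hvu
    subst hv
    -- apply `RB` to `w - u`
    have hΓwu : Γ₁ (w - u) = B (Γ₂ (w - u)) := by
      rw [← sub_eq_zero]
      simp only [map_sub]
      calc Γ₁ w - Γ₁ u - (B (Γ₂ w) - B (Γ₂ u))
          = (Γ₁ w - B (Γ₂ w)) - (Γ₁ u - B (Γ₂ u)) := by abel
        _ = 0 := by rw [hbd]; abel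
    have hkey := hRB.2 (w - u) hΓwu
    have harg2 : T (w - u) - lam • ((w - u : dom) : H) = h := by
      simp only [map_sub, Submodule.coe_sub, smul_sub, hTu]
      rw [← hw]; abel
    rw [harg2] at hkey
    rw [hkey]
    simp only [Submodule.coe_sub, Submodule.coe_neg]
    abel
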